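/- Let $\{X_j\}_{j \in \mathbb{N}}$ be a positive recurrent irreducible Markov chain on a countable state space $\mathcal{S}$, let $V, f, g$ be non-negative functions on $\mathcal{S}$, and let $1 \le L < K$ be integers. Suppose (i) $\mathrm{E}[V(X_{k+1})] < \infty$ whenever $\mathrm{E}[V(X_k)] < \infty$, and (ii) $\mathrm{E}[V(X_{k+K}) - V(X_{k+L}) \mid X_k = x] \le -f(x) + g(x)$ for all $x \in \mathcal{S}$. If $\hat{X}$ is distributed according to the stationary distribution of the chain, then $\mathrm{E}[f(\hat{X})] \le \mathrm{E}[g(\hat{X})]$. -/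

import Mathlib

open scoped ENNReal

section MarkovChain

variable {S : Type*}

/-- `P` is a Markov transition kernel on the state space `S`. -/
def IsTransKernel (P : S → S → ℝ≥0∞) : Prop := ∀ x, ∑' y, P x y = 1

/-- `n`-step transition probabilities of the time-homogeneous chain with kernel `P`. -/
noncomputable def stepN (P : S → S → ℝ≥0∞) : ℕ → S → S → ℝ≥0∞
  | 0 => fun x y => by classical exact if x = y then 1 else 0
  | n + 1 => fun x y => ∑' z, P x z * stepN P n z y

/-- The chain is irreducible: every state can reach every other state. -/
def MCIrreducible (P : S → S → ℝ≥0∞) : Prop := ∀ x y : S, ∃ n : ℕ, stepN P n x y ≠ 0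

/-- `firstHit P x n z`: the probability that the chain started at `z` first hits `x`
at time exactly `n`. -/
noncomputable def firstHit (P : S → S → ℝ≥0∞) (x : S) : ℕ → S → ℝ≥0∞
  | 0 => fun z => by classical exact if z = x then 1 else 0
  | n + 1 => fun z => by
      classical exact if z = x then 0 else ∑' w, P z w * firstHit P x n w

/-- `firstReturn P x n`: the probability that the chain started at `x` first returns
to `x` at time exactly `n ≥ 1`. -/
noncomputable def firstReturn (P : S → S → ℝ≥0∞) (x : S) : ℕ → ℝ≥0∞
  | 0 => 0
  | n + 1 => ∑' z, P x z * firstHit P x n z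

/-- The chain is positive recurrent. -/
def MCPositiveRecurrent (P : S → S → ℝ≥0∞) : Prop :=
  ∀ x : S, (∑' n : ℕ, firstReturn P x n = 1) ∧
    (∑' n : ℕ, (n : ℝ≥0∞) * firstReturn P x n ≠ ⊤)

/-- `π` is a stationary probability distribution for the kernel `P`. -/
def IsStationaryDist (P : S → S → ℝ≥0∞) (π : S → ℝ≥0∞) : Prop :=
  (∑' x, π x = 1) ∧ ∀ y, (∑' x, π x * P x y) = π y

end MarkovChain

/-! Summing the expectations of `V` over the window `L ≤ j < K` gives a function `U` with
`PU + E[V(X_L)] = U + E[V(X_K)]`, so the two-time drift becomes the one-step drift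
`PU + f ≤ U + g`. Integrating a one-step drift against `π` cancels `PU` with `U`, provided
`∑ π U` is finite; truncating `U` at a level `M` preserves the drift on `{U ≤ M}` and makes
everything finite, and letting `M → ∞` gives `∑ π f ≤ ∑ π g`. -/

open Finset

theorem Finset.sum_Ico_succ_add_eq {M : Type*} [AddCommMonoid M] (u : ℕ → M) {a b : ℕ}
    (hab : a ≤ b) : ∑ j ∈ Ico a b, u (j + 1) + u a = ∑ j ∈ Ico a b, u j + u b := by
  induction b, hab using Nat.le_induction with
  | base => simp
  | succ b hab ih =>
    rw [sum_Ico_succ_top hab, sum_Ico_succ_top hab, add_right_comm, ih, add_right_comm]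

section MarkovChain

variable {S : Type*} (P : S → S → ℝ≥0∞)

/-- `stepExpect P n h x = E[h(X_n) ∣ X_0 = x]`. -/
noncomputable def stepExpect (n : ℕ) (h : S → ℝ≥0∞) (x : S) : ℝ≥0∞ :=
  ∑' y, stepN P n x y * h y

theorem stepExpect_zero (h : S → ℝ≥0∞) (x : S) : stepExpect P 0 h x = h x := by
  classical
  simp [stepExpect, stepN]

theorem stepExpect_succ (n : ℕ) (h : S → ℝ≥0∞) (x : S) :
    stepExpect P (n + 1) h x = ∑' y, P x y * stepExpect P n h y := by
  simp only [stepExpect, stepN, ← ENNReal.tsum_mul_right, ← ENNReal.tsum_mul_left, mul_assoc]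
  exact ENNReal.tsum_comm

theorem stepExpect_ne_top {h : S → ℝ≥0∞} (h_ne_top : ∀ x, h x ≠ ⊤)
    (hstep : ∀ x n, stepExpect P n h x ≠ ⊤ → stepExpect P (n + 1) h x ≠ ⊤) (n : ℕ) (x : S) :
    stepExpect P n h x ≠ ⊤ := by
  induction n with
  | zero => simpa [stepExpect_zero] using h_ne_top x
  | succ n ih => exact hstep x n ih

theorem tsum_kernel_sum_stepExpect_add (h : S → ℝ≥0∞) {a b : ℕ} (hab : a ≤ b) (x : S) :
    ∑' y, P x y * ∑ j ∈ Ico a b, stepExpect P j h y + stepExpect P a h x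
      = ∑ j ∈ Ico a b, stepExpect P j h x + stepExpect P b h x := by
  simp only [mul_sum]
  rw [Summable.tsum_finsetSum fun _ _ ↦ ENNReal.summable]
  simp only [← stepExpect_succ]
  exact sum_Ico_succ_add_eq (fun j ↦ stepExpect P j h x) hab

theorem tsum_stationary_mul_tsum_kernel {π : S → ℝ≥0∞} (hπ : IsStationaryDist P π)
    (c : S → ℝ≥0∞) : ∑' x, π x * ∑' y, P x y * c y = ∑' y, π y * c y := by
  simp only [← ENNReal.tsum_mul_left, ← mul_assoc]
  rw [ENNReal.tsum_comm]
  simp only [ENNReal.tsum_mul_right, hπ.2]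

/-- `PU ≤ U - f + g`, written additively to avoid truncated subtraction in `ℝ≥0∞`. -/
def HasDrift (U f g : S → ℝ≥0∞) : Prop :=
  ∀ x, ∑' y, P x y * U y + f x ≤ U x + g x

variable {P}

theorem HasDrift.min_const (hP : IsTransKernel P) {U f g : S → ℝ≥0∞} (h : HasDrift P U f g)
    (M : ℝ≥0∞) :
    HasDrift P (fun x ↦ min (U x) M) (fun x ↦ if U x ≤ M then f x else 0) g := by
  intro x
  dsimp only
  split_ifs with hUx
  · calc ∑' y, P x y * min (U y) M + f x ≤ ∑' y, P x y * U y + f x := by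
          gcongr; exact min_le_left _ _
      _ ≤ U x + g x := h x
      _ = min (U x) M + g x := by rw [min_eq_left hUx]
  · calc ∑' y, P x y * min (U y) M + 0 ≤ ∑' y, P x y * M := by
          rw [add_zero]; gcongr; exact min_le_right _ _
      _ = M := by rw [ENNReal.tsum_mul_right, hP x, one_mul]
      _ = min (U x) M := (min_eq_right (not_le.1 hUx).le).symm
      _ ≤ min (U x) M + g x := le_self_add

theorem HasDrift.tsum_mul_le_of_le {π : S → ℝ≥0∞} (hπ : IsStationaryDist P π)
    {U f g : S → ℝ≥0∞} (h : HasDrift P U f g) {M : ℝ≥0∞} (hUM : ∀ x, U x ≤ M) (hM : M ≠ ⊤) :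
    ∑' x, π x * f x ≤ ∑' x, π x * g x := by
  have hU_ne_top : ∑' x, π x * U x ≠ ⊤ := by
    refine ne_top_of_le_ne_top hM ?_
    calc ∑' x, π x * U x ≤ ∑' x, π x * M := by gcongr; exact hUM _
      _ = M := by rw [ENNReal.tsum_mul_right, hπ.1, one_mul]
  refine (ENNReal.add_le_add_iff_left hU_ne_top).1 ?_
  calc ∑' x, π x * U x + ∑' x, π x * f x
      = ∑' x, π x * (∑' y, P x y * U y + f x) := by
        rw [← tsum_stationary_mul_tsum_kernel P hπ, ← ENNReal.tsum_add]
        simp only [mul_add]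
    _ ≤ ∑' x, π x * (U x + g x) := ENNReal.tsum_le_tsum fun x ↦ mul_le_mul_right (h x) _
    _ = ∑' x, π x * U x + ∑' x, π x * g x := by simp only [mul_add, ENNReal.tsum_add]

theorem HasDrift.tsum_mul_le (hP : IsTransKernel P) {π : S → ℝ≥0∞} (hπ : IsStationaryDist P π)
    {U f g : S → ℝ≥0∞} (h : HasDrift P U f g) (hU : ∀ x, U x ≠ ⊤) :
    ∑' x, π x * f x ≤ ∑' x, π x * g x := by
  rw [ENNReal.tsum_eq_iSup_sum]
  refine iSup_le fun s ↦ ?_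
  set M := ∑ x ∈ s, U x
  have hM : M ≠ ⊤ := ENNReal.sum_ne_top.2 fun x _ ↦ hU x
  calc ∑ x ∈ s, π x * f x
      = ∑ x ∈ s, π x * (if U x ≤ M then f x else 0) := by
        refine sum_congr rfl fun x hx ↦ ?_
        rw [if_pos (single_le_sum (fun _ _ ↦ zero_le) hx)]
    _ ≤ ∑' x, π x * (if U x ≤ M then f x else 0) := ENNReal.sum_le_tsum s
    _ ≤ ∑' x, π x * g x :=
        (h.min_const hP M).tsum_mul_le_of_le hπ (fun _ ↦ min_le_right _ _) hM

theorem hasDrift_sum_Ico_stepExpect {V f g : S → ℝ≥0∞} (hV : ∀ j x, stepExpect P j V x ≠ ⊤)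
    {L K : ℕ} (hLK : L ≤ K)
    (hdrift : ∀ x, stepExpect P K V x + f x ≤ stepExpect P L V x + g x) :
    HasDrift P (fun x ↦ ∑ j ∈ Ico L K, stepExpect P j V x) f g := by
  intro x
  rw [← ENNReal.add_le_add_iff_right (hV L x), add_right_comm,
    tsum_kernel_sum_stepExpect_add P V hLK x, add_assoc, add_right_comm _ (g x), add_assoc]
  exact add_le_add_right (hdrift x) _

end MarkovChain

theorem moment_bound_two_time_general (S : Type*) (P : S → S → ℝ≥0∞)
    (hP : IsTransKernel P)
    (V f g : S → ℝ≥0∞) (hVfin : ∀ x, V x ≠ ⊤)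
    (L K : ℕ) (hLK : L < K)
    (hfin : ∀ (x₀ : S) (k : ℕ), (∑' y, stepN P k x₀ y * V y) ≠ ⊤ →
      (∑' y, stepN P (k + 1) x₀ y * V y) ≠ ⊤)
    (hdrift : ∀ x : S,
      (∑' y, stepN P K x y * V y) + f x
        ≤ (∑' y, stepN P L x y * V y) + g x)
    (π : S → ℝ≥0∞) (hπ : IsStationaryDist P π) :
    (∑' x, π x * f x) ≤ ∑' x, π x * g x := by
  have hV := stepExpect_ne_top P hVfin hfin
  exact (hasDrift_sum_Ico_stepExpect hV hLK.le hdrift).tsum_mul_le hP hπ fun x ↦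
    ENNReal.sum_ne_top.2 fun j _ ↦ hV j x

/-- a moment bound from a two-future-time drift condition. If a positive
recurrent irreducible chain satisfies
`E[V(X_{k+K}) - V(X_{k+L}) ∣ X_k = x] ≤ -f(x) + g(x)` with `V, f, g ≥ 0` and
`E[V(X_{k+1})] < ∞` whenever `E[V(X_k)] < ∞`, then in stationarity
`E[f(X̂)] ≤ E[g(X̂)]`. -/
theorem moment_bound_two_time (S : Type*) [Countable S] (P : S → S → ℝ≥0∞)
    (hP : IsTransKernel P) (hirr : MCIrreducible P) (hpos : MCPositiveRecurrent P)
    (V f g : S → ℝ≥0∞) (hVfin : ∀ x, V x ≠ ⊤)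
    (L K : ℕ) (hL : 1 ≤ L) (hLK : L < K)
    (hfin : ∀ (x₀ : S) (k : ℕ), (∑' y, stepN P k x₀ y * V y) ≠ ⊤ →
      (∑' y, stepN P (k + 1) x₀ y * V y) ≠ ⊤)
    (hdrift : ∀ x : S,
      (∑' y, stepN P K x y * V y) + f x
        ≤ (∑' y, stepN P L x y * V y) + g x)
    (π : S → ℝ≥0∞) (hπ : IsStationaryDist P π) :
    (∑' x, π x * f x) ≤ ∑' x, π x * g x :=
  moment_bound_two_time_general S P hP V f g hVfin L K hLK hfin hdrift π hπ
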